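/- arXiv:1707.04521 — 2 statements merged into one kernel-verified Lean document; each statement's English description precedes it below -/
import Mathlib

section
/- Let W : ℝ^{3×3} → ℝ be differentiable and frame indifferent, i.e. W(RF) = W(F) for all F ∈ ℝ^{3×3} and all R ∈ SO(3). Then for every F ∈ ℝ^{3×3} the matrix DW(F)·Fᵀ is symmetric. -/
/-!
For a skew-symmetric `A`, `t ↦ exp (t • A)` is a curve in `SO(n)` through `1` with velocity `A`:
`(exp A)ᵀ = exp (-A)` makes it orthogonal, and `det (exp A) = det (exp (A / 2)) ^ 2 ≥ 0` rules out
determinant `-1`. Differentiating `W (exp (t • A) * F) = W F` at `t = 0` gives `DW(F) : (A F) = 0`,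
and for `A = E_ji - E_ij` this is the equality of the `(i, j)` and `(j, i)` entries of `DW(F) Fᵀ`.
-/

open Matrix

abbrev M3 := Matrix (Fin 3) (Fin 3) ℝ

def SO3 (R : M3) : Prop := Rᵀ * R = 1 ∧ R.det = 1

attribute [local instance] Matrix.normedAddCommGroup Matrix.normedSpace

/-- The derivative of `W` at `F`, identified with a matrix via `DW(F) : H = d/dt|₀ W(F + tH)`. -/
noncomputable def matDeriv (W : M3 → ℝ) (F : M3) : M3 :=
  fun i j => fderiv ℝ W F (Matrix.single i j 1)

open NormedSpace

namespace Matrix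

variable {n : Type*} [Fintype n] [DecidableEq n]

theorem transpose_exp_mul_exp_of_transpose_eq_neg {A : Matrix n n ℝ} (hA : Aᵀ = -A) :
    (exp A)ᵀ * exp A = 1 := by
  rw [← exp_transpose, hA, ← exp_add_of_commute _ _ (Commute.neg_left (Commute.refl A)),
    neg_add_cancel, exp_zero]

theorem det_exp_nonneg (A : Matrix n n ℝ) : 0 ≤ (exp A).det := by
  have h : A = 2 • ((2 : ℝ)⁻¹ • A) := by
    rw [two_nsmul, ← add_smul]; norm_num
  rw [h, exp_nsmul, det_pow]
  exact sq_nonneg _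

theorem exp_mem_specialOrthogonalGroup_of_transpose_eq_neg {A : Matrix n n ℝ} (hA : Aᵀ = -A) :
    exp A ∈ specialOrthogonalGroup n ℝ := by
  have horth := transpose_exp_mul_exp_of_transpose_eq_neg hA
  have hsq : (exp A).det ^ 2 = 1 := by
    rw [sq]; nth_rw 1 [← det_transpose]; rw [← det_mul, horth, det_one]
  refine mem_specialOrthogonalGroup_iff.2 ⟨(mem_orthogonalGroup_iff' n ℝ).2 horth, ?_⟩
  nlinarith [det_exp_nonneg A]

theorem hasDerivAt_exp_smul_mul_zero (A F : Matrix n n ℝ) :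
    HasDerivAt (fun t : ℝ => exp (t • A) * F) (A * F) 0 := by
  -- `exp` is differentiable for the operator norm; `HasDerivAt` only sees the topology, which
  -- that norm shares with the entrywise one in force here.
  have h := open scoped Norms.Operator in (hasDerivAt_exp_smul_const (𝕂 := ℝ) A 0).mul_const F
  rw [zero_smul, exp_zero, one_mul] at h
  exact h

theorem fderiv_apply_mul_eq_zero_of_transpose_eq_neg {W : Matrix n n ℝ → ℝ} {F : Matrix n n ℝ}
    (hW : DifferentiableAt ℝ W F) (hinv : ∀ R ∈ specialOrthogonalGroup n ℝ, W (R * F) = W F)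
    {A : Matrix n n ℝ} (hA : Aᵀ = -A) : fderiv ℝ W F (A * F) = 0 := by
  have hcomp := hW.hasFDerivAt.comp_hasDerivAt_of_eq 0 (hasDerivAt_exp_smul_mul_zero A F)
    (by rw [zero_smul, exp_zero, one_mul])
  have hconst : W ∘ (fun t : ℝ => exp (t • A) * F) = fun _ => W F := by
    funext t
    refine hinv _ (exp_mem_specialOrthogonalGroup_of_transpose_eq_neg ?_)
    rw [transpose_smul, hA, smul_neg]
  rw [hconst] at hcomp
  exact hcomp.unique (hasDerivAt_const 0 (W F))

end Matrix

theorem mem_specialOrthogonalGroup_iff_SO3 {R : M3} :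
    R ∈ specialOrthogonalGroup (Fin 3) ℝ ↔ SO3 R := by
  rw [mem_specialOrthogonalGroup_iff, mem_orthogonalGroup_iff']
  rfl

theorem matDeriv_mul_transpose_apply (W : M3 → ℝ) (F : M3) (i j : Fin 3) :
    (matDeriv W F * Fᵀ) i j = fderiv ℝ W F (single i j 1 * F) := by
  have h : single i j 1 * F = ∑ k, F j k • single i k 1 := by
    ext a b
    by_cases hia : i = a <;> simp [hia, mul_apply, single_apply, Matrix.sum_apply]
  simp only [h, map_sum, map_smul, mul_apply, matDeriv, transpose_apply, smul_eq_mul, mul_comm]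

/-- If `W : ℝ^{3×3} → ℝ` is differentiable and frame indifferent,
then `DW(F)·Fᵀ` is symmetric for every `F`. -/
theorem frame_indifferent_stress_symmetric (W : M3 → ℝ) (hW : Differentiable ℝ W)
    (hframe : ∀ (R F : M3), SO3 R → W (R * F) = W F) (F : M3) :
    (matDeriv W F * Fᵀ)ᵀ = matDeriv W F * Fᵀ := by
  ext i j
  have hskew : (single j i 1 - single i j 1 : M3)ᵀ = -(single j i 1 - single i j 1) := by
    rw [transpose_sub, transpose_single, transpose_single, neg_sub]
  have hrot := fderiv_apply_mul_eq_zero_of_transpose_eq_neg (hW F)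
    (fun R hR => hframe R F (mem_specialOrthogonalGroup_iff_SO3.1 hR)) hskew
  rw [sub_mul, map_sub, sub_eq_zero] at hrot
  rw [transpose_apply, matDeriv_mul_transpose_apply, matDeriv_mul_transpose_apply, hrot]
end

section
/- Suppose W : ℝ^{3×3} → [0,∞) is differentiable, satisfies the local upper bound W(F) ≤ β' dist²(F, SO(3)) for all F with dist(F, SO(3)) ≤ ρ (for some ρ, β' > 0), and has linear stress growth |DW(F)| ≤ M(|F|+1) for all F. Then there exists β > 0 such that W(F) ≤ β dist²(F, SO(3)) for all F ∈ ℝ^{3×3}. -/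
/-!
Rotations have Frobenius norm `√3`, so `|F - 1| ≤ dist(F, SO(3)) + 2√3` and `W(1) ≤ 0` by the
local bound. By the mean value theorem on the segment from `1` to `F`, linear stress growth gives
`W(F) ≤ W(1) + M (|1| + |F - 1| + 1) |F - 1|`, which is quadratic in `dist(F, SO(3))` as soon as
that distance is at least `ρ`; below `ρ` the local bound applies.
-/

open Matrix

noncomputable def frob (A : M3) : ℝ := Real.sqrt (∑ i, ∑ j, (A i j) ^ 2)

/-- `dist(F, SO(3)) = inf_{R ∈ SO(3)} |F − R|` in the Frobenius norm. -/
noncomputable def distSO (F : M3) : ℝ := sInf ((fun R => frob (F - R)) '' {R | SO3 R})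

attribute [local instance] Matrix.normedAddCommGroup Matrix.normedSpace

open Set

noncomputable def frobVec (A : M3) : EuclideanSpace ℝ (Fin 3 × Fin 3) :=
  WithLp.toLp 2 fun p => A p.1 p.2

lemma frob_eq_norm_frobVec (A : M3) : frob A = ‖frobVec A‖ := by
  simp [EuclideanSpace.norm_eq, frob, frobVec, Fintype.sum_prod_type, Real.norm_eq_abs, sq_abs]

lemma inner_frobVec (A B : M3) : inner ℝ (frobVec A) (frobVec B) = ∑ i, ∑ j, A i j * B i j := by
  simp [frobVec, PiLp.inner_apply, Fintype.sum_prod_type, mul_comm]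

lemma frob_nonneg (A : M3) : 0 ≤ frob A := Real.sqrt_nonneg _

lemma frob_add_le (A B : M3) : frob (A + B) ≤ frob A + frob B := by
  simp only [frob_eq_norm_frobVec]
  exact norm_add_le (frobVec A) (frobVec B)

lemma frob_neg (A : M3) : frob (-A) = frob A := by
  simp [frob]

lemma frob_smul (t : ℝ) (A : M3) : frob (t • A) = |t| * frob A := by
  simp only [frob_eq_norm_frobVec, ← Real.norm_eq_abs]
  exact norm_smul t (frobVec A)

lemma frob_of_SO3 {R : M3} (hR : SO3 R) : frob R = Real.sqrt 3 := by
  have hcol : ∀ j, ∑ i, R i j ^ 2 = 1 := fun j => by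
    simpa [Matrix.mul_apply, sq] using congrFun (congrFun hR.1 j) j
  simp [frob, Finset.sum_comm (f := fun i j => R i j ^ 2), hcol]

lemma SO3_one : SO3 1 := ⟨by simp, by simp⟩

lemma distSO_one : distSO 1 = 0 := by
  refine le_antisymm (csInf_le ?_ ⟨1, SO3_one, by simp [frob]⟩) (le_csInf ?_ ?_)
  · exact ⟨0, by rintro _ ⟨R, -, rfl⟩; exact frob_nonneg _⟩
  · exact ⟨_, 1, SO3_one, rfl⟩
  · rintro _ ⟨R, -, rfl⟩; exact frob_nonneg _

lemma frob_sub_one_le_distSO_add (F : M3) : frob (F - 1) ≤ distSO F + 2 * Real.sqrt 3 := by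
  suffices frob (F - 1) - 2 * Real.sqrt 3 ≤ distSO F by linarith
  refine le_csInf ⟨_, 1, SO3_one, rfl⟩ ?_
  rintro _ ⟨R, hR, rfl⟩
  have h₁ := frob_add_le (F - R) (R - 1)
  have h₂ := frob_add_le R (-1)
  rw [frob_neg, frob_of_SO3 hR, frob_of_SO3 SO3_one, ← sub_eq_add_neg] at h₂
  rw [sub_add_sub_cancel] at h₁
  linarith

lemma fderiv_apply_eq_sum_mul_matDeriv (W : M3 → ℝ) (F H : M3) :
    fderiv ℝ W F H = ∑ i, ∑ j, H i j * matDeriv W F i j := by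
  conv_lhs => rw [Matrix.matrix_eq_sum_single H]
  simp only [map_sum, matDeriv]
  refine Finset.sum_congr rfl fun i _ => Finset.sum_congr rfl fun j _ => ?_
  rw [show single i j (H i j) = H i j • single i j (1 : ℝ) by simp [Matrix.smul_single],
    map_smul, smul_eq_mul]

lemma abs_fderiv_apply_le (W : M3 → ℝ) (F H : M3) :
    |fderiv ℝ W F H| ≤ frob (matDeriv W F) * frob H := by
  rw [fderiv_apply_eq_sum_mul_matDeriv, ← inner_frobVec, frob_eq_norm_frobVec,
    frob_eq_norm_frobVec, mul_comm]
  exact abs_real_inner_le_norm _ _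

lemma sub_le_mul_frob_of_frob_matDeriv_le {W : M3 → ℝ} (hW : Differentiable ℝ W)
    {G H : M3} {C : ℝ}
    (hC : ∀ t ∈ Icc (0 : ℝ) 1, frob (matDeriv W (G + t • H)) ≤ C) :
    W (G + H) - W G ≤ C * frob H := by
  have hderiv : ∀ t : ℝ, HasDerivAt (fun t : ℝ => W (G + t • H)) (fderiv ℝ W (G + t • H) H) t :=
    fun t => by
      have := (hW _).hasFDerivAt.comp_hasDerivAt t (((hasDerivAt_id' t).smul_const H).const_add G)
      rwa [one_smul] at this
  have hmvt := norm_image_sub_le_of_norm_deriv_le_segment_01' (C := C * frob H)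
    (fun t _ => (hderiv t).hasDerivWithinAt) fun t ht =>
      (abs_fderiv_apply_le W _ H).trans
        (mul_le_mul_of_nonneg_right (hC t (Ico_subset_Icc_self ht)) (frob_nonneg H))
  simp only [one_smul, zero_smul, add_zero, Real.norm_eq_abs] at hmvt
  exact (le_abs_self _).trans hmvt

lemma sub_le_of_linear_growth {W : M3 → ℝ} (hW : Differentiable ℝ W) {M : ℝ} (hM : 0 ≤ M)
    (hgrowth : ∀ F, frob (matDeriv W F) ≤ M * (frob F + 1)) (G H : M3) :
    W (G + H) - W G ≤ M * (frob G + frob H + 1) * frob H := by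
  refine sub_le_mul_frob_of_frob_matDeriv_le hW fun t ht => (hgrowth _).trans ?_
  have hsmul : frob (t • H) ≤ frob H := by
    rw [frob_smul, abs_of_nonneg ht.1]
    exact mul_le_of_le_one_left (frob_nonneg H) ht.2
  have := frob_add_le G (t • H)
  gcongr
  linarith

lemma le_mul_distSO_sq_of_le_distSO {W : M3 → ℝ} (hW : Differentiable ℝ W) {M ρ : ℝ}
    (hM : 0 ≤ M) (hgrowth : ∀ F, frob (matDeriv W F) ≤ M * (frob F + 1)) (hW1 : W 1 ≤ 0)
    (hρ : 0 < ρ) {F : M3} (hF : ρ ≤ distSO F) : W F ≤ M * (1 + 7 / ρ) ^ 2 * distSO F ^ 2 := by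
  have hmvt := sub_le_of_linear_growth hW hM hgrowth 1 (F - 1)
  rw [add_sub_cancel, frob_of_SO3 SO3_one] at hmvt
  set s := frob (F - 1)
  set d := distSO F
  have hsqrt : Real.sqrt 3 ≤ 2 := by
    rw [Real.sqrt_le_left (by norm_num)]; norm_num
  have hs : s ≤ d + 4 := by linarith [frob_sub_one_le_distSO_add F]
  have hd : d + 7 ≤ (1 + 7 / ρ) * d := by
    have : 7 ≤ 7 / ρ * d := by rw [div_mul_eq_mul_div, le_div_iff₀ hρ]; linarith
    linarith
  calc W F ≤ M * (Real.sqrt 3 + s + 1) * s := by linarith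
    _ ≤ M * ((1 + 7 / ρ) * d) * ((1 + 7 / ρ) * d) := by
        have := frob_nonneg (F - 1)
        have : 0 ≤ (1 + 7 / ρ) * d := by linarith
        gcongr <;> linarith
    _ = M * (1 + 7 / ρ) ^ 2 * d ^ 2 := by ring

theorem global_quadratic_bound_general (W : M3 → ℝ) (hW : Differentiable ℝ W)
    (ρ β' M : ℝ) (hρ : 0 < ρ) (hβ' : 0 < β') (hM : 0 < M)
    (hlocal : ∀ F, distSO F ≤ ρ → W F ≤ β' * distSO F ^ 2)
    (hgrowth : ∀ F, frob (matDeriv W F) ≤ M * (frob F + 1)) :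
    ∃ β > 0, ∀ F, W F ≤ β * distSO F ^ 2 := by
  have hW1 : W 1 ≤ 0 := by
    simpa [distSO_one] using hlocal 1 (by rw [distSO_one]; exact hρ.le)
  refine ⟨max β' (M * (1 + 7 / ρ) ^ 2), lt_max_of_lt_left hβ', fun F => ?_⟩
  rcases le_total (distSO F) ρ with hnear | hfar
  · exact (hlocal F hnear).trans (by gcongr; exact le_max_left _ _)
  · exact (le_mul_distSO_sq_of_le_distSO hW hM.le hgrowth hW1 hρ hfar).trans
      (by gcongr; exact le_max_right _ _)

/-- A differentiable nonnegative `W` with a local quadratic upper bound near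
`SO(3)` and linear stress growth satisfies a global quadratic upper bound
`W(F) ≤ β dist²(F, SO(3))`. -/
theorem global_quadratic_bound (W : M3 → ℝ) (hW : Differentiable ℝ W)
    (hnonneg : ∀ F, 0 ≤ W F)
    (ρ β' M : ℝ) (hρ : 0 < ρ) (hβ' : 0 < β') (hM : 0 < M)
    (hlocal : ∀ F, distSO F ≤ ρ → W F ≤ β' * distSO F ^ 2)
    (hgrowth : ∀ F, frob (matDeriv W F) ≤ M * (frob F + 1)) :
    ∃ β > 0, ∀ F, W F ≤ β * distSO F ^ 2 :=
  global_quadratic_bound_general W hW ρ β' M hρ hβ' hM hlocal hgrowth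
end
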